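/- For regular languages L' and L with state complexities m and n respectively (over the same alphabet), the state complexity of the product (concatenation) L'·L is at most (m−1)·2^n + 2^{n−1}. -/
import Mathlib

/-- The state complexity of a language: the least number of states of a DFA accepting it. -/
noncomputable def stateComplexity {α : Type*} (L : Language α) : ℕ :=
  sInf {k : ℕ | ∃ M : DFA α (Fin k), M.accepts = L}

section Reindex
variable {α : Type*}

lemma stateComplexity_le_card {σ : Type*} [Fintype σ] (M : DFA α σ) :
    stateComplexity M.accepts ≤ Fintype.card σ :=
  Nat.sInf_le ⟨DFA.reindex (Fintype.equivFin σ) M, DFA.accepts_reindex _ _⟩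

end Reindex

section Concat
variable {α σ τ : Type*} (M' : DFA α σ) (M : DFA α τ)

/-- States of the product automaton. -/
def ConcatState : Type _ :=
  {p : σ × Set τ // p.1 ∈ M'.accept → M.start ∈ p.2}

instance [Finite σ] [Finite τ] : Finite (ConcatState M' M) :=
  Subtype.finite

noncomputable instance [Finite σ] [Finite τ] : Fintype (ConcatState M' M) :=
  Fintype.ofFinite _

/-- Product (concatenation) automaton. -/
def concatDFA : DFA α (ConcatState M' M) where
  step p a := ⟨(M'.step p.1.1 a,
      (fun t => M.step t a) '' p.1.2 ∪ {t | M'.step p.1.1 a ∈ M'.accept ∧ t = M.start}),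
    fun h => Or.inr ⟨h, rfl⟩⟩
  start := ⟨(M'.start, {t | M'.start ∈ M'.accept ∧ t = M.start}), fun h => ⟨h, rfl⟩⟩
  accept := {p | ∃ t ∈ p.1.2, t ∈ M.accept}

lemma concat_eval (w : List α) :
    ((concatDFA M' M).eval w).1 =
      (M'.eval w, {t | ∃ x y, x ++ y = w ∧ M'.eval x ∈ M'.accept ∧ M.eval y = t}) := by
  induction w using List.reverseRecOn with
  | nil =>
      refine Prod.ext rfl ?_
      ext t
      simp only [Set.mem_setOf_eq]
      constructor
      · rintro ⟨h1, rfl⟩; exact ⟨[], [], rfl, h1, rfl⟩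
      · rintro ⟨x, y, hxy, hx, rfl⟩
        rcases List.append_eq_nil_iff.mp hxy with ⟨rfl, rfl⟩
        exact ⟨hx, rfl⟩
  | append_singleton w a ih =>
      have hstep : (concatDFA M' M).eval (w ++ [a])
          = (concatDFA M' M).step ((concatDFA M' M).eval w) a :=
        DFA.eval_append_singleton _ _ _
      rw [hstep]
      refine Prod.ext ?_ ?_
      · show M'.step ((concatDFA M' M).eval w).1.1 a = M'.eval (w ++ [a])
        rw [ih]
        simp [DFA.eval_append_singleton]
      · show (fun t => M.step t a) '' ((concatDFA M' M).eval w).1.2 ∪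
            {t | M'.step ((concatDFA M' M).eval w).1.1 a ∈ M'.accept ∧ t = M.start} = _
        rw [ih]
        ext t
        simp only [Set.mem_union, Set.mem_image, Set.mem_setOf_eq]
        constructor
        · rintro (⟨s, ⟨x, y, rfl, hx, rfl⟩, rfl⟩ | ⟨h1, rfl⟩)
          · exact ⟨x, y ++ [a], by simp, hx, M.eval_append_singleton _ _⟩
          · refine ⟨w ++ [a], [], by simp, ?_, rfl⟩
            rwa [DFA.eval_append_singleton]
        · rintro ⟨x, y, hxy, hx, rfl⟩
          rcases List.eq_nil_or_concat y with rfl | ⟨z, b, rfl⟩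
          · right
            rw [List.append_nil] at hxy
            subst hxy
            exact ⟨by rwa [DFA.eval_append_singleton] at hx, rfl⟩
          · left
            rw [List.concat_eq_append] at *
            rw [← List.append_assoc] at hxy
            obtain ⟨hxz, hba⟩ := List.append_inj' hxy rfl
            obtain rfl : b = a := by simpa using hba
            exact ⟨M.eval z, ⟨x, z, hxz, hx, rfl⟩, (M.eval_append_singleton _ _).symm⟩

lemma concat_accepts : (concatDFA M' M).accepts = M'.accepts * M.accepts := by
  ext w
  rw [DFA.mem_accepts, Language.mem_mul]
  show (∃ t ∈ ((concatDFA M' M).eval w).1.2, t ∈ M.accept) ↔ _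
  rw [concat_eval]
  simp only [Set.mem_setOf_eq]
  constructor
  · rintro ⟨t, ⟨x, y, hxy, hx, rfl⟩, ht⟩
    exact ⟨x, hx, y, ht, hxy⟩
  · rintro ⟨x, hx, y, hy, hxy⟩
    exact ⟨M.eval y, ⟨x, y, hxy, hx, rfl⟩, hy⟩

end Concat

section Card

open Classical in
lemma concatState_card_le {α : Type*} {m n : ℕ} (M' : DFA α (Fin m)) (M : DFA α (Fin n))
    {q₀ : Fin m} (hq₀ : q₀ ∈ M'.accept) :
    Nat.card (ConcatState M' M) ≤ (m - 1) * 2 ^ n + 2 ^ (n - 1) := by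
  classical
  have e2 : {S : Set (Fin n) // M.start ∈ S} ≃ Set {x : Fin n // x ≠ M.start} :=
    { toFun := fun S => {x | (x : Fin n) ∈ S.1}
      invFun := fun T => ⟨insert M.start (Subtype.val '' T), Set.mem_insert _ _⟩
      left_inv := by
        rintro ⟨S, hS⟩
        ext x
        simp only [Set.mem_insert_iff, Set.mem_image, Set.mem_setOf_eq, Subtype.exists]
        constructor
        · rintro (rfl | ⟨y, hy, hyS, rfl⟩)
          · exact hS
          · exact hyS
        · intro hx
          by_cases hxs : x = M.start
          · exact Or.inl hxs
          · exact Or.inr ⟨x, hxs, hx, rfl⟩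
      right_inv := by
        intro T
        ext x
        simp only [Set.mem_setOf_eq, Set.mem_insert_iff, Set.mem_image, Subtype.exists]
        constructor
        · rintro (h | ⟨y, hy, hyT, hxy⟩)
          · exact absurd h x.2
          · have : x = ⟨y, hy⟩ := Subtype.ext hxy.symm
            rwa [this]
        · intro hx
          exact Or.inr ⟨x.1, x.2, hx, rfl⟩ }
  let f : ConcatState M' M →
      ({q : Fin m // q ≠ q₀} × Set (Fin n)) ⊕ {S : Set (Fin n) // M.start ∈ S} := fun p =>
    if hq : p.1.1 = q₀ then Sum.inr ⟨p.1.2, p.2 (hq ▸ hq₀)⟩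
    else Sum.inl (⟨p.1.1, hq⟩, p.1.2)
  have hf : Function.Injective f := by
    rintro ⟨⟨q1, S1⟩, h1⟩ ⟨⟨q2, S2⟩, h2⟩ h
    simp only [f] at h
    split_ifs at h with hq1 hq2 hq2
    · simp only [Sum.inr.injEq, Subtype.mk.injEq] at h
      subst hq1; subst hq2
      exact Subtype.ext (Prod.ext rfl h)
    · simp only [Sum.inl.injEq, Prod.mk.injEq, Subtype.mk.injEq] at h
      exact Subtype.ext (Prod.ext h.1 h.2)
  calc Nat.card (ConcatState M' M)
      ≤ Nat.card (({q : Fin m // q ≠ q₀} × Set (Fin n)) ⊕ {S : Set (Fin n) // M.start ∈ S}) :=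
        Nat.card_le_card_of_injective f hf
    _ = (m - 1) * 2 ^ n + 2 ^ (n - 1) := by
        rw [Nat.card_sum, Nat.card_prod, Nat.card_congr e2]
        simp [Nat.card_eq_fintype_card]

end Card

/-- For regular languages `L'` and `L` over the same alphabet, of state complexities
`m` and `n` respectively, the state complexity of the concatenation `L' · L` is at most
`(m−1)·2^n + 2^(n−1)`. -/
theorem product_stateComplexity_le {α : Type*} (m n : ℕ) (L' L : Language α)
    (hreg' : ∃ M' : DFA α (Fin m), M'.accepts = L')
    (hreg : ∃ M : DFA α (Fin n), M.accepts = L)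
    (hm : stateComplexity L' = m) (hn : stateComplexity L = n) :
    stateComplexity (L' * L) ≤ (m - 1) * 2 ^ n + 2 ^ (n - 1) := by
  classical
  obtain ⟨M', hM'⟩ := hreg'
  obtain ⟨M, hM⟩ := hreg
  by_cases hA : ∃ q₀, q₀ ∈ M'.accept
  · obtain ⟨q₀, hq₀⟩ := hA
    have hacc : (concatDFA M' M).accepts = L' * L := by
      rw [concat_accepts, hM', hM]
    have h1 : stateComplexity (L' * L) ≤ Fintype.card (ConcatState M' M) := by
      rw [← hacc]; exact stateComplexity_le_card _
    calc stateComplexity (L' * L) ≤ Fintype.card (ConcatState M' M) := h1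
      _ = Nat.card (ConcatState M' M) := (Nat.card_eq_fintype_card).symm
      _ ≤ (m - 1) * 2 ^ n + 2 ^ (n - 1) := concatState_card_le M' M hq₀
  · have hempty : L' * L = (fun _ => False) := by
      have hL' : L' = (fun _ => False) := by
        rw [← hM']
        ext w
        simp only [DFA.mem_accepts]
        exact iff_of_false (fun h => hA ⟨_, h⟩) id
      ext w
      rw [Language.mem_mul]
      constructor
      · rintro ⟨x, hx, _⟩
        rw [hL'] at hx
        exact hx
      · exact fun h => h.elim
    rw [hempty]
    have : stateComplexity ((fun _ => False : Language α)) ≤ 1 := by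
      have : ∃ M0 : DFA α (Fin 1), M0.accepts = (fun _ => False : Language α) := by
        refine ⟨⟨fun _ _ => 0, 0, ∅⟩, ?_⟩
        ext w
        exact iff_of_false (by simp [DFA.mem_accepts]) (fun h => h)
      exact Nat.sInf_le this
    calc stateComplexity _ ≤ 1 := this
      _ ≤ 2 ^ (n - 1) := Nat.one_le_two_pow
      _ ≤ (m - 1) * 2 ^ n + 2 ^ (n - 1) := Nat.le_add_left _ _
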